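/- Let G be a Vilenkin group, a a p-atom supported on I_N, and α ∈ ℕ with ⟨α⟩ ≥ N. Then for every x ∉ I_N, S_α a(x) = 0. -/

import Mathlib

open MeasureTheory Complex Real

def Mseq (m : ℕ → ℕ) : ℕ → ℕ
  | 0 => 1
  | k + 1 => m k * Mseq m k

def digit (m : ℕ → ℕ) (n j : ℕ) : ℕ := n / Mseq m j % m j

noncomputable def hi (m : ℕ → ℕ) (n : ℕ) : ℕ := sSup {j | digit m n j ≠ 0}

noncomputable def lo (m : ℕ → ℕ) (n : ℕ) : ℕ := sInf {j | digit m n j ≠ 0}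

noncomputable def rho (m : ℕ → ℕ) (n : ℕ) : ℕ := hi m n - lo m n

abbrev Gm (m : ℕ → ℕ) := ∀ k, ZMod (m k)

instance (n : ℕ) : MeasurableSpace (ZMod n) := ⊤

noncomputable def rad (m : ℕ → ℕ) (j : ℕ) (x : Gm m) : ℂ :=
  Complex.exp (2 * Real.pi * Complex.I * ((x j).val : ℂ) / (m j : ℂ))

noncomputable def vil (m : ℕ → ℕ) (n : ℕ) (x : Gm m) : ℂ :=
  ∏ᶠ j, rad m j x ^ digit m n j

noncomputable def Dker (m : ℕ → ℕ) (n : ℕ) (x : Gm m) : ℂ :=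
  ∑ k ∈ Finset.range n, vil m k x

/-- The defining property of the normalized Haar measure on the Vilenkin group:
every cylinder set `I_n(x)` has measure `1 / M_n`. -/
def IsVilenkinHaar (m : ℕ → ℕ) (μ : Measure (Gm m)) : Prop :=
  ∀ (n : ℕ) (x : Gm m), μ {y : Gm m | ∀ j < n, y j = x j} = (Mseq m n : ENNReal)⁻¹

noncomputable def vilCoeff (m : ℕ → ℕ) (μ : Measure (Gm m)) (f : Gm m → ℂ) (j : ℕ) : ℂ :=
  ∫ t, f t * (starRingEnd ℂ) (vil m j t) ∂μ

noncomputable def Svil (m : ℕ → ℕ) (μ : Measure (Gm m)) (f : Gm m → ℂ) (n : ℕ) (x : Gm m) : ℂ :=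
  ∑ j ∈ Finset.range n, vilCoeff m μ f j * vil m j x

/-- `a : G_m → ℂ` is a `p`-atom supported on the cylinder `I_N`: it is measurable,
vanishes off `I_N`, satisfies `‖a‖_∞ ≤ μ(I_N)^{-1/p} = M_N^{1/p}` and has mean zero. -/
def IsPAtom (m : ℕ → ℕ) (μ : Measure (Gm m)) (p : ℝ) (N : ℕ) (a : Gm m → ℂ) : Prop :=
  Measurable a ∧
    (∀ x : Gm m, (¬ ∀ j < N, x j = 0) → a x = 0) ∧
    (∀ x : Gm m, ‖a x‖ ≤ (Mseq m N : ℝ) ^ (1 / p)) ∧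
    ∫ x, a x ∂μ = 0

/-! The Vilenkin characters with index `< M_N` are trivial on `I_N`, so on functions supported on
`I_N` the Fourier coefficients are constant on each block `[q M_N, (q + 1) M_N)`. Since
`w_{q M_N + r} = w_{q M_N} w_r` for `r < M_N`, a partial sum `S_α` with `M_N ∣ α` (which is what
`⟨α⟩ ≥ N` means) factors through the Dirichlet kernel `D_{M_N} = ∏_{j < N} ∑_{d < m_j} r_j^d`,
and this vanishes off `I_N` because some factor is a full geometric sum of a nontrivial root of
unity. -/

open Finset

section Vilenkin

variable {m : ℕ → ℕ}

lemma Mseq_succ (k : ℕ) : Mseq m (k + 1) = m k * Mseq m k := rfl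

lemma Mseq_pos (hm : ∀ k, 0 < m k) (k : ℕ) : 0 < Mseq m k := by
  induction k with
  | zero => exact Nat.one_pos
  | succ k ih => exact Nat.mul_pos (hm k) ih

lemma Mseq_dvd_Mseq {j k : ℕ} (h : j ≤ k) : Mseq m j ∣ Mseq m k := by
  induction k, h using Nat.le_induction with
  | base => exact dvd_rfl
  | succ k _ ih => exact ih.trans (Dvd.intro_left _ (Mseq_succ k).symm)

lemma Mseq_le_Mseq (hm : ∀ k, 0 < m k) {j k : ℕ} (h : j ≤ k) : Mseq m j ≤ Mseq m k :=
  Nat.le_of_dvd (Mseq_pos hm k) (Mseq_dvd_Mseq h)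

lemma lt_Mseq_self (hm : ∀ k, 2 ≤ m k) (n : ℕ) : n < Mseq m n := by
  induction n with
  | zero => exact Nat.one_pos
  | succ n ih => rw [Mseq_succ]; nlinarith [hm n]

lemma digit_eq_zero_of_lt {n j : ℕ} (h : n < Mseq m j) : digit m n j = 0 := by
  simp [digit, Nat.div_eq_of_lt h]

lemma digit_mul_Mseq_add_of_lt (hm : ∀ k, 0 < m k) {j N : ℕ} (hj : j < N) (q r : ℕ) :
    digit m (q * Mseq m N + r) j = digit m r j := by
  obtain ⟨c, hc⟩ := Mseq_dvd_Mseq (m := m) (Nat.succ_le_of_lt hj)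
  have hqM : q * Mseq m N = (q * c) * m j * Mseq m j := by rw [hc, Mseq_succ]; ring
  rw [digit, hqM, Nat.add_comm, Nat.add_mul_div_right _ _ (Mseq_pos hm j),
    Nat.add_mul_mod_self_right, digit]

lemma digit_mul_Mseq_of_lt (hm : ∀ k, 0 < m k) {j N : ℕ} (hj : j < N) (q : ℕ) :
    digit m (q * Mseq m N) j = 0 := by
  simpa [digit_eq_zero_of_lt (Mseq_pos hm j)] using digit_mul_Mseq_add_of_lt hm hj q 0

lemma digit_mul_Mseq_add_of_le (hm : ∀ k, 0 < m k) {j N r : ℕ} (hj : N ≤ j)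
    (hr : r < Mseq m N) (q : ℕ) :
    digit m (q * Mseq m N + r) j = digit m (q * Mseq m N) j := by
  obtain ⟨c, hc⟩ := Mseq_dvd_Mseq (m := m) hj
  have hMN := Mseq_pos hm N
  rw [digit, digit, hc, ← Nat.div_div_eq_div_mul, ← Nat.div_div_eq_div_mul, Nat.add_comm,
    Nat.add_mul_div_right _ _ hMN, Nat.div_eq_of_lt hr, Nat.zero_add, Nat.mul_div_cancel _ hMN]

lemma digit_mul_Mseq_add (hm : ∀ k, 0 < m k) {N r : ℕ} (hr : r < Mseq m N) (q j : ℕ) :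
    digit m (q * Mseq m N + r) j = digit m (q * Mseq m N) j + digit m r j := by
  rcases Nat.lt_or_ge j N with hj | hj
  · rw [digit_mul_Mseq_add_of_lt hm hj, digit_mul_Mseq_of_lt hm hj, Nat.zero_add]
  · rw [digit_mul_Mseq_add_of_le hm hj hr,
      digit_eq_zero_of_lt (hr.trans_le (Mseq_le_Mseq hm hj)), Nat.add_zero]

lemma Mseq_dvd_of_digit_eq_zero (hm : ∀ k, 0 < m k) {n N : ℕ}
    (h : ∀ j < N, digit m n j = 0) : Mseq m N ∣ n := by
  induction N with
  | zero => exact one_dvd n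
  | succ N ih =>
    obtain ⟨c, rfl⟩ := ih fun j hj => h j (Nat.lt_succ_of_lt hj)
    have hc : c % m N = 0 := by
      simpa [digit, Nat.mul_div_cancel_left _ (Mseq_pos hm N)] using h N (Nat.lt_succ_self N)
    obtain ⟨d, rfl⟩ := Nat.dvd_of_mod_eq_zero hc
    exact ⟨d, by rw [Mseq_succ]; ring⟩

lemma rad_eq_exp_pow (j : ℕ) (x : Gm m) :
    rad m j x = exp (2 * π * I / m j) ^ (x j).val := by
  rw [rad, ← Complex.exp_nat_mul]
  ring_nf

lemma rad_eq_one_of_eq_zero {j : ℕ} {t : Gm m} (ht : t j = 0) : rad m j t = 1 := by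
  simp [rad_eq_exp_pow, ht]

lemma sum_range_rad_pow_eq_zero {j : ℕ} (hmj : 0 < m j) {x : Gm m} (hx : x j ≠ 0) :
    ∑ d ∈ range (m j), rad m j x ^ d = 0 := by
  have : NeZero (m j) := ⟨hmj.ne'⟩
  have hζ := Complex.isPrimitiveRoot_exp (m j) hmj.ne'
  have hv : 0 < (x j).val := Nat.pos_of_ne_zero ((ZMod.val_ne_zero _).mpr hx)
  have hne : rad m j x ≠ 1 := by
    rw [rad_eq_exp_pow, Ne, hζ.pow_eq_one_iff_dvd]
    exact Nat.not_dvd_of_pos_of_lt hv (ZMod.val_lt (x j))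
  have hpow : rad m j x ^ m j = 1 := by
    rw [rad_eq_exp_pow, pow_right_comm, hζ.pow_eq_one, one_pow]
  rw [geom_sum_eq hne, hpow, sub_self, zero_div]

lemma vil_eq_prod_range (hm : ∀ k, 0 < m k) {n K : ℕ} (h : n < Mseq m K) (x : Gm m) :
    vil m n x = ∏ j ∈ range K, rad m j x ^ digit m n j := by
  refine finprod_eq_prod_of_mulSupport_subset _ fun j hj => ?_
  rw [coe_range, Set.mem_Iio]
  by_contra hK
  have hlt : n < Mseq m j := h.trans_le (Mseq_le_Mseq hm (not_lt.mp hK))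
  exact hj (by simp only [digit_eq_zero_of_lt hlt, pow_zero])

lemma vil_eq_one_of_lt_Mseq (hm : ∀ k, 0 < m k) {N r : ℕ} (hr : r < Mseq m N) {t : Gm m}
    (ht : ∀ j < N, t j = 0) : vil m r t = 1 := by
  rw [vil_eq_prod_range hm hr]
  exact prod_eq_one fun j hj => by rw [rad_eq_one_of_eq_zero (ht j (mem_range.mp hj)), one_pow]

lemma vil_mul_Mseq_add (hm : ∀ k, 2 ≤ m k) {N r : ℕ} (hr : r < Mseq m N) (q : ℕ) (x : Gm m) :
    vil m (q * Mseq m N + r) x = vil m (q * Mseq m N) x * vil m r x := by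
  have hm0 : ∀ k, 0 < m k := fun k => zero_lt_two.trans_le (hm k)
  set n := q * Mseq m N + r
  have hn := lt_Mseq_self hm n
  rw [vil_eq_prod_range hm0 hn, vil_eq_prod_range hm0 ((Nat.le_add_right _ r).trans_lt hn),
    vil_eq_prod_range hm0 ((Nat.le_add_left r _).trans_lt hn), ← prod_mul_distrib]
  exact prod_congr rfl fun j _ => by rw [digit_mul_Mseq_add hm0 hr, pow_add]

lemma vil_mul_Mseq (hm : ∀ k, 0 < m k) {N q : ℕ} (hq : q < m N) (x : Gm m) :
    vil m (q * Mseq m N) x = rad m N x ^ q := by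
  have hlt : q * Mseq m N < Mseq m (N + 1) :=
    (Nat.mul_lt_mul_right (Mseq_pos hm N)).mpr hq
  have htop : digit m (q * Mseq m N) N = q := by
    rw [digit, Nat.mul_div_cancel _ (Mseq_pos hm N), Nat.mod_eq_of_lt hq]
  rw [vil_eq_prod_range hm hlt, prod_range_succ, htop,
    prod_eq_one fun j hj => by rw [digit_mul_Mseq_of_lt hm (mem_range.mp hj), pow_zero], one_mul]

lemma sum_range_mul_eq_sum_sum {M : Type*} [AddCommMonoid M] (f : ℕ → M) (t b : ℕ) :
    ∑ k ∈ range (t * b), f k = ∑ q ∈ range t, ∑ r ∈ range b, f (q * b + r) := by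
  induction t with
  | zero => simp
  | succ t ih => rw [Nat.succ_mul, sum_range_add, ih, sum_range_succ]

lemma sum_range_Mseq_mul_add (hm : ∀ k, 2 ≤ m k) (N q : ℕ) (x : Gm m) :
    ∑ r ∈ range (Mseq m N), vil m (q * Mseq m N + r) x
      = vil m (q * Mseq m N) x * Dker m (Mseq m N) x := by
  rw [Dker, mul_sum]
  exact sum_congr rfl fun r hr => vil_mul_Mseq_add hm (mem_range.mp hr) q x

lemma Dker_Mseq_eq_prod (hm : ∀ k, 2 ≤ m k) (N : ℕ) (x : Gm m) :
    Dker m (Mseq m N) x = ∏ j ∈ range N, ∑ d ∈ range (m j), rad m j x ^ d := by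
  have hm0 : ∀ k, 0 < m k := fun k => zero_lt_two.trans_le (hm k)
  induction N with
  | zero => simp [Dker, Mseq, vil_eq_prod_range hm0 (show 0 < Mseq m 0 from Nat.one_pos)]
  | succ N ih =>
    rw [prod_range_succ, ← ih, Dker, Mseq_succ, sum_range_mul_eq_sum_sum, mul_sum]
    refine sum_congr rfl fun q hq => ?_
    rw [sum_range_Mseq_mul_add hm, vil_mul_Mseq hm0 (mem_range.mp hq), mul_comm]

lemma Dker_Mseq_eq_zero (hm : ∀ k, 2 ≤ m k) {N : ℕ} {x : Gm m} (hx : ¬ ∀ j < N, x j = 0) :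
    Dker m (Mseq m N) x = 0 := by
  push Not at hx
  obtain ⟨j, hj, hxj⟩ := hx
  rw [Dker_Mseq_eq_prod hm]
  exact prod_eq_zero (mem_range.mpr hj)
    (sum_range_rad_pow_eq_zero (zero_lt_two.trans_le (hm j)) hxj)

variable (μ : Measure (Gm m))

lemma vilCoeff_mul_Mseq_add (hm : ∀ k, 2 ≤ m k) {f : Gm m → ℂ} {N r : ℕ}
    (hf : ∀ t : Gm m, (¬ ∀ j < N, t j = 0) → f t = 0) (hr : r < Mseq m N) (q : ℕ) :
    vilCoeff m μ f (q * Mseq m N + r) = vilCoeff m μ f (q * Mseq m N) := by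
  have hm0 : ∀ k, 0 < m k := fun k => zero_lt_two.trans_le (hm k)
  refine congrArg (integral μ) (funext fun t => ?_)
  by_cases ht : ∀ j < N, t j = 0
  · rw [vil_mul_Mseq_add hm hr, vil_eq_one_of_lt_Mseq hm0 hr ht, mul_one]
  · rw [hf t ht, zero_mul, zero_mul]

lemma Svil_mul_Mseq (hm : ∀ k, 2 ≤ m k) {f : Gm m → ℂ} {N : ℕ}
    (hf : ∀ t : Gm m, (¬ ∀ j < N, t j = 0) → f t = 0) (t : ℕ) (x : Gm m) :
    Svil m μ f (t * Mseq m N) x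
      = (∑ q ∈ range t, vilCoeff m μ f (q * Mseq m N) * vil m (q * Mseq m N) x)
        * Dker m (Mseq m N) x := by
  rw [Svil, sum_range_mul_eq_sum_sum, sum_mul]
  refine sum_congr rfl fun q _ => ?_
  rw [mul_assoc, ← sum_range_Mseq_mul_add hm, mul_sum]
  exact sum_congr rfl fun r hr => by rw [vilCoeff_mul_Mseq_add μ hm hf (mem_range.mp hr)]

end Vilenkin

theorem stmt_16_general (m : ℕ → ℕ) (hm : ∀ k, 2 ≤ m k) (μ : Measure (Gm m))
    (p : ℝ) (N : ℕ) (a : Gm m → ℂ)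
    (ha : IsPAtom m μ p N a) (α : ℕ) (hα : N ≤ lo m α) :
    ∀ x : Gm m, (¬ ∀ j < N, x j = 0) → Svil m μ a α x = 0 := by
  intro x hx
  have hdigit : ∀ j < N, digit m α j = 0 := fun j hj =>
    not_not.mp (Nat.notMem_of_lt_sInf (s := {j | digit m α j ≠ 0}) (hj.trans_le hα))
  obtain ⟨t, rfl⟩ := Mseq_dvd_of_digit_eq_zero (fun k => zero_lt_two.trans_le (hm k)) hdigit
  rw [mul_comm, Svil_mul_Mseq μ hm ha.2.1, Dker_Mseq_eq_zero hm hx, mul_zero]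

/-- If `a` is a `p`-atom supported on `I_N` and `⟨α⟩ ≥ N`, then `S_α a` vanishes
outside `I_N`. -/
theorem stmt_16 (m : ℕ → ℕ) (hm : ∀ k, 2 ≤ m k) (μ : Measure (Gm m))
    (hprob : IsProbabilityMeasure μ) (hHaar : IsVilenkinHaar m μ)
    (p : ℝ) (hp0 : 0 < p) (hp1 : p ≤ 1) (N : ℕ) (a : Gm m → ℂ)
    (ha : IsPAtom m μ p N a) (α : ℕ) (hα : N ≤ lo m α) :
    ∀ x : Gm m, (¬ ∀ j < N, x j = 0) → Svil m μ a α x = 0 :=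
  stmt_16_general m hm μ p N a ha α hα
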